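/- Let U be a finite nonempty set, S a finite collection of subsets of U, Δ > 0 a real number, w(s, e) = 1 if e ∈ s and 1 + Δ otherwise, and J(A) = ∑_{e ∈ U} min_{s ∈ A} w(s, e) for nonempty finite A ⊆ S. Let b be a positive integer with b ≤ |S|. Then there exists a subfamily of S of size b that covers U if and only if there exists a nonempty finite A ⊆ S with |A| = b and J(A) = |U|. Equivalently, the minimum of J over all size-b subfamilies of S equals |U| exactly when a set cover of size b exists, establishing the correctness of the reduction from Set Cover used to prove that the budget-constrained map selection problem is NP-hard. -/
import Mathlib


open scoped Classical

/-- The set-cover reduction objective: given a real `Δ`, the weight of the pair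
`(s, e)` is `1` if `e ∈ s` and `1 + Δ` otherwise, and for a nonempty finite
family `A` of subsets of `U`, `J(A) = ∑_{e ∈ U} min_{s ∈ A} w(s, e)`. -/
noncomputable def coverJ {U : Type*} [Fintype U]
    (A : Finset (Set U)) (hA : A.Nonempty) (Δ : ℝ) : ℝ :=
  ∑ e : U, A.inf' hA (fun s => if e ∈ s then (1 : ℝ) else 1 + Δ)


/-- **Correctness of the Set Cover reduction:** for a finite nonempty universe
`U`, a finite collection `S` of subsets of `U`, `Δ > 0`, and a positive budget
`b ≤ |S|`, there exists a size-`b` subfamily of `S` covering `U` if and only if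
there exists a nonempty subfamily `A ⊆ S` with `|A| = b` and `J(A) = |U|`. -/
theorem setCover_iff_coverJ_eq_card {U : Type*} [Fintype U] [Nonempty U]
    (S : Finset (Set U)) (Δ : ℝ) (hΔ : 0 < Δ)
    (b : ℕ) (hb : 0 < b) (hbS : b ≤ S.card) :
    (∃ A : Finset (Set U), A ⊆ S ∧ A.card = b ∧ ∀ e : U, ∃ s ∈ A, e ∈ s) ↔
      (∃ (A : Finset (Set U)) (hA : A.Nonempty), A ⊆ S ∧ A.card = b ∧
        coverJ A hA Δ = (Fintype.card U : ℝ)) := by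
  constructor
  · rintro ⟨A, hAS, hAcard, hcov⟩
    have hA : A.Nonempty := Finset.card_pos.mp (hAcard ▸ hb)
    refine ⟨A, hA, hAS, hAcard, ?_⟩
    have hterm : ∀ e : U,
        A.inf' hA (fun s => if e ∈ s then (1 : ℝ) else 1 + Δ) = 1 := by
      intro e
      obtain ⟨s, hsA, hes⟩ := hcov e
      apply le_antisymm
      · calc A.inf' hA (fun s => if e ∈ s then (1 : ℝ) else 1 + Δ)
            ≤ (if e ∈ s then (1 : ℝ) else 1 + Δ) := Finset.inf'_le _ hsA
          _ = 1 := by simp [hes]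
      · apply Finset.le_inf'
        intro t _
        by_cases h : e ∈ t <;> simp [h] <;> linarith
    simp [coverJ, hterm]
  · rintro ⟨A, hA, hAS, hAcard, hJ⟩
    refine ⟨A, hAS, hAcard, ?_⟩
    intro e
    have hge : ∀ x : U, (1 : ℝ) ≤
        A.inf' hA (fun s => if x ∈ s then (1 : ℝ) else 1 + Δ) := by
      intro x
      apply Finset.le_inf'
      intro t _
      by_cases h : x ∈ t <;> simp [h] <;> linarith
    have heach : ∀ x : U,
        A.inf' hA (fun s => if x ∈ s then (1 : ℝ) else 1 + Δ) = 1 := by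
      by_contra hne
      push_neg at hne
      obtain ⟨x, hx⟩ := hne
      have hxgt : 1 < A.inf' hA (fun s => if x ∈ s then (1 : ℝ) else 1 + Δ) :=
        lt_of_le_of_ne (hge x) (Ne.symm hx)
      have : (Fintype.card U : ℝ) < coverJ A hA Δ := by
        have := Finset.sum_lt_sum (s := (Finset.univ : Finset U))
          (f := fun _ => (1 : ℝ))
          (g := fun x => A.inf' hA (fun s => if x ∈ s then (1 : ℝ) else 1 + Δ))
          (fun i _ => hge i) ⟨x, Finset.mem_univ x, hxgt⟩
        simpa [coverJ, Finset.card_univ] using this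
      linarith [hJ]
    obtain ⟨s, hsA, hs⟩ := Finset.exists_mem_eq_inf' hA
      (fun s => if e ∈ s then (1 : ℝ) else 1 + Δ)
    refine ⟨s, hsA, ?_⟩
    by_contra hes
    rw [heach e] at hs
    simp [hes] at hs
    linarith
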